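/- On R^4, with the compatible Poisson brackets of the group A_{4,1} (P with nonzero entries P^{12} = p12 + (p23/2)x4^2, P^{13} = p23 x4, P^{14} = p14, P^{23} = p23; P' with nonzero entries P'^{12} = p'_{12} - (a44+p'_{24})x2 + a23 x3 + a24 x4 + p'_{13} x4 + a44 x3 x4, P'^{13} = p'_{13} + a44 x3, P'^{14} = (p'_{24}+a44)x4, P'^{24} = p'_{24}), assume p14 p23 ≠ 0. Then the functions H1 = a44 x4 / p14 and H2 = (2 p14 p'_{24}(p'_{13} + a44 x3) + a44^2 p23 x4^2)/(2 p14^2 p23) are in bi-involution: {H1,H2} = 0 and {H1,H2}' = 0, where {f,g} = P^{μν}∂_μ f ∂_ν g and {f,g}' = P'^{μν}∂_μ f ∂_ν g. -/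
import Mathlib


open scoped BigOperators

noncomputable def pd {m : ℕ} (μ : Fin m) (f : (Fin m → ℝ) → ℝ) (x : Fin m → ℝ) : ℝ :=
  fderiv ℝ f x (Pi.single μ 1)

/-- Poisson bracket associated to a bivector field `P`. -/
noncomputable def pbrk {m : ℕ} (P : (Fin m → ℝ) → Fin m → Fin m → ℝ)
    (f g : (Fin m → ℝ) → ℝ) (x : Fin m → ℝ) : ℝ :=
  ∑ μ, ∑ ν, P x μ ν * pd μ f x * pd ν g x

/-- Schouten bracket `[P,P]^{λμν}`. -/
noncomputable def schouten {m : ℕ} (P : (Fin m → ℝ) → Fin m → Fin m → ℝ)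
    (l μ ν : Fin m) (x : Fin m → ℝ) : ℝ :=
  ∑ ρ, (P x ρ l * pd ρ (fun y => P y μ ν) x
      + P x ρ ν * pd ρ (fun y => P y l μ) x
      + P x ρ μ * pd ρ (fun y => P y ν l) x)

/-- Mixed Schouten bracket `[P,Q]^{λμν}`. -/
noncomputable def schoutenMixed {m : ℕ} (P Q : (Fin m → ℝ) → Fin m → Fin m → ℝ)
    (l μ ν : Fin m) (x : Fin m → ℝ) : ℝ :=
  ∑ ρ, (P x ρ l * pd ρ (fun y => Q y μ ν) x + Q x ρ l * pd ρ (fun y => P y μ ν) x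
      + P x ρ ν * pd ρ (fun y => Q y l μ) x + Q x ρ ν * pd ρ (fun y => P y l μ) x
      + P x ρ μ * pd ρ (fun y => Q y ν l) x + Q x ρ μ * pd ρ (fun y => P y ν l) x)

/-- The Poisson bivector `P` on the group `A_{4,1}`. -/
noncomputable def P41 (p12 p14 p23 : ℝ) : (Fin 4 → ℝ) → Fin 4 → Fin 4 → ℝ :=
  fun x μ ν =>
    !![0, p12 + p23 / 2 * (x 3) ^ 2, p23 * x 3, p14;
       -(p12 + p23 / 2 * (x 3) ^ 2), 0, p23, 0;
       -(p23 * x 3), -p23, 0, 0;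
       -p14, 0, 0, 0] μ ν

/-- The Poisson bivector `P'` on the group `A_{4,1}`. -/
noncomputable def P41' (p12' p13' p24' a23 a24 a44 : ℝ) : (Fin 4 → ℝ) → Fin 4 → Fin 4 → ℝ :=
  fun x μ ν =>
    let A := p12' - (a44 + p24') * x 1 + a23 * x 2 + a24 * x 3 + p13' * x 3 + a44 * x 2 * x 3
    let B := p13' + a44 * x 2
    let C := (p24' + a44) * x 3
    !![0, A, B, C;
       -A, 0, 0, p24';
       -B, 0, 0, 0;
       -C, -p24', 0, 0] μ ν


lemma hasFDerivAt_proj (i : Fin 4) (x : Fin 4 → ℝ) :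
    HasFDerivAt (fun y : Fin 4 → ℝ => y i)
      (ContinuousLinearMap.proj i : (Fin 4 → ℝ) →L[ℝ] ℝ) x :=
  (ContinuousLinearMap.proj i : (Fin 4 → ℝ) →L[ℝ] ℝ).hasFDerivAt

lemma pd_lin (a p : ℝ) (μ : Fin 4) (x : Fin 4 → ℝ) :
    pd μ (fun y => a * y 3 / p) x = a / p * (Pi.single μ 1 : Fin 4 → ℝ) 3 := by
  unfold pd
  rw [show (fun y : Fin 4 → ℝ => a * y 3 / p) = fun y => (a / p) * y 3 from
    funext fun y => by ring]
  rw [((hasFDerivAt_proj 3 x).const_mul (a / p)).fderiv]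
  simp

lemma pd_quad (c0 c2 c3 e : ℝ) (μ : Fin 4) (x : Fin 4 → ℝ) :
    pd μ (fun y => (c0 + c2 * y 2 + c3 * (y 3) ^ 2) / e) x
      = (c2 * (Pi.single μ 1 : Fin 4 → ℝ) 2
        + c3 * (2 * x 3) * (Pi.single μ 1 : Fin 4 → ℝ) 3) / e := by
  unfold pd
  rw [show (fun y : Fin 4 → ℝ => (c0 + c2 * y 2 + c3 * (y 3) ^ 2) / e)
      = fun y => c0 / e + (c2 / e) * y 2 + (c3 / e) * (y 3 * y 3) from
    funext fun y => by ring]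
  have h : HasFDerivAt
      (fun y : Fin 4 → ℝ => c0 / e + (c2 / e) * y 2 + (c3 / e) * (y 3 * y 3))
      (((c2 / e) • (ContinuousLinearMap.proj 2 : (Fin 4 → ℝ) →L[ℝ] ℝ)
        + (c3 / e) • (x 3 • (ContinuousLinearMap.proj 3 : (Fin 4 → ℝ) →L[ℝ] ℝ)
            + x 3 • (ContinuousLinearMap.proj 3 : (Fin 4 → ℝ) →L[ℝ] ℝ)))) x :=
    (((hasFDerivAt_proj 2 x).const_mul (c2 / e)).const_add (c0 / e)).add
      (((hasFDerivAt_proj 3 x).mul (hasFDerivAt_proj 3 x)).const_mul (c3 / e))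
  rw [h.fderiv]
  simp
  ring

theorem A41_bi_involution (p12 p14 p23 p12' p13' p24' a23 a24 a44 : ℝ)
    (hne : p14 * p23 ≠ 0) :
    let H1 : (Fin 4 → ℝ) → ℝ := fun x => a44 * x 3 / p14
    let H2 : (Fin 4 → ℝ) → ℝ := fun x =>
      (2 * p14 * p24' * (p13' + a44 * x 2) + a44 ^ 2 * p23 * (x 3) ^ 2) / (2 * p14 ^ 2 * p23)
    (∀ x, pbrk (P41 p12 p14 p23) H1 H2 x = 0) ∧
    (∀ x, pbrk (P41' p12' p13' p24' a23 a24 a44) H1 H2 x = 0) := by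
  intro H1 H2
  have hH1 : H1 = fun y => a44 * y 3 / p14 := rfl
  have hH2 : H2 = fun y => (2 * p14 * p24' * p13' + 2 * p14 * p24' * a44 * y 2
      + a44 ^ 2 * p23 * (y 3) ^ 2) / (2 * p14 ^ 2 * p23) := by
    funext y; show (2 * p14 * p24' * (p13' + a44 * y 2) + a44 ^ 2 * p23 * (y 3) ^ 2) / (2 * p14 ^ 2 * p23) = _
    ring
  constructor <;> intro x <;>
    simp only [pbrk, hH1, hH2, pd_lin, pd_quad, Fin.sum_univ_four] <;>
    · simp (config := { decide := true }) [P41, P41', Pi.single_apply,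
        Matrix.vecHead, Matrix.vecTail]
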